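/- For any symmetric traceless 3×3 matrix B and any unit vector n, one has |B|² ≥ (3/2)(n·Bn)². -/

import Mathlib

/-! For traceless `B` the quadratic form `n ⬝ Bn` is the Frobenius inner product of `B` with
`nnᵀ - I/d`, and for a unit vector `n` this matrix has squared Frobenius norm `1 - 1/d`.
Cauchy–Schwarz gives `(n ⬝ Bn)² ≤ (1 - 1/d) |B|²`, which for `d = 3` is the claim, with equality
when `B` is proportional to `nnᵀ - I/3`. -/

open Matrix Finset

section
variable {ι : Type*} [Fintype ι]

theorem sum_sum_mul_sq_le_sq_mul_sq (A C : Matrix ι ι ℝ) :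
    (∑ i, ∑ j, A i j * C i j) ^ 2 ≤ (∑ i, ∑ j, A i j ^ 2) * ∑ i, ∑ j, C i j ^ 2 := by
  simpa only [Fintype.sum_prod_type] using
    sum_mul_sq_le_sq_mul_sq univ (fun p : ι × ι => A p.1 p.2) (fun p => C p.1 p.2)

variable [DecidableEq ι]

omit [Fintype ι] in
theorem vecMulVec_sub_smul_one_apply (n : ι → ℝ) (c : ℝ) (i j : ι) :
    (vecMulVec n n - c • 1) i j = n i * n j - if i = j then c else 0 := by
  simp [vecMulVec_apply, one_apply]

theorem sum_sum_mul_vecMulVec_sub_smul_one (B : Matrix ι ι ℝ) (n : ι → ℝ) (c : ℝ) :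
    ∑ i, ∑ j, B i j * (vecMulVec n n - c • 1) i j
      = ∑ i, ∑ j, n i * B i j * n j - c * B.trace := by
  have hmul : ∀ i j, B i j * (vecMulVec n n - c • 1) i j
      = n i * B i j * n j - if i = j then c * B i i else 0 := by
    intro i j
    rw [vecMulVec_sub_smul_one_apply]
    split_ifs with h
    · subst h; ring
    · ring
  simp only [hmul, sum_sub_distrib, sum_ite_eq, mem_univ, if_true, trace, Matrix.diag, mul_sum]

theorem sum_sum_vecMulVec_sub_smul_one_sq (n : ι → ℝ) (c : ℝ) :
    ∑ i, ∑ j, (vecMulVec n n - c • 1) i j ^ 2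
      = (∑ i, n i ^ 2) ^ 2 - 2 * c * ∑ i, n i ^ 2 + c ^ 2 * Fintype.card ι := by
  have hsq : ∀ i j, (vecMulVec n n - c • 1) i j ^ 2
      = n i ^ 2 * n j ^ 2 - if i = j then 2 * c * n i ^ 2 - c ^ 2 else 0 := by
    intro i j
    rw [vecMulVec_sub_smul_one_apply]
    split_ifs with h
    · subst h; ring
    · ring
  simp only [hsq, sum_sub_distrib, sum_ite_eq, mem_univ, if_true, ← mul_sum, ← sum_mul,
    sum_const, card_univ, nsmul_eq_mul]
  ring

theorem quadForm_sq_le_of_trace_eq_zero (B : Matrix ι ι ℝ) (htr : B.trace = 0) (n : ι → ℝ)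
    (hn : ∑ i, n i ^ 2 = 1) :
    (∑ i, ∑ j, n i * B i j * n j) ^ 2 ≤ (1 - 1 / Fintype.card ι) * ∑ i, ∑ j, B i j ^ 2 := by
  have : Nonempty ι := by
    by_contra h
    simp [not_nonempty_iff.mp h] at hn
  set C := vecMulVec n n - (1 / Fintype.card ι : ℝ) • 1
  have hC : ∑ i, ∑ j, C i j ^ 2 = 1 - 1 / Fintype.card ι := by
    rw [sum_sum_vecMulVec_sub_smul_one_sq, hn]
    field_simp
    ring
  calc (∑ i, ∑ j, n i * B i j * n j) ^ 2 = (∑ i, ∑ j, B i j * C i j) ^ 2 := by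
        rw [sum_sum_mul_vecMulVec_sub_smul_one, htr, mul_zero, sub_zero]
    _ ≤ (∑ i, ∑ j, B i j ^ 2) * ∑ i, ∑ j, C i j ^ 2 := sum_sum_mul_sq_le_sq_mul_sq B C
    _ = _ := by rw [hC, mul_comm]
end

theorem norm_sq_ge_quadform_sq (B : Matrix (Fin 3) (Fin 3) ℝ)
    (htr : B.trace = 0)
    (n : Fin 3 → ℝ) (hn : ∑ i, n i ^ 2 = 1) :
    (3 / 2 : ℝ) * (∑ i, ∑ j, n i * B i j * n j) ^ 2 ≤ ∑ i, ∑ j, (B i j) ^ 2 := by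
  have hbound := quadForm_sq_le_of_trace_eq_zero B htr n hn
  norm_num at hbound
  linarith
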